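/- Density corollary: Let S be the set of positive integers q such that there exists k with 1 ≤ k < q, gcd(k,q) = 1, and k/q has a continued fraction expansion [0;a_1,...,a_m] bounded in average by 2. Then liminf_{n→∞} log|S ∩ [1,n]| / log n ≥ log 2 / log(1+√2) (≈ 0.786). -/

import Mathlib

/-- Auxiliary continuant, recursing on the first entry. -/
def contAux : List ℕ → ℕ
  | [] => 1
  | [a] => a
  | a :: b :: t => a * contAux (b :: t) + contAux t

/-- The continuant `K(a₁,…,aₘ)`: `K() = 1`, `K(a₁) = a₁`,
`K(a₁,…,aₘ) = aₘ·K(a₁,…,a_{m-1}) + K(a₁,…,a_{m-2})`. -/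
def continuant (l : List ℕ) : ℕ := contAux l.reverse

/-- A list of positive integers is bounded in average by `B` if every
prefix sum `a₁ + ⋯ + a_r` is at most `B·r`. -/
def BddAvg (B : ℕ) (l : List ℕ) : Prop :=
  ∀ r, 1 ≤ r → r ≤ l.length → (l.take r).sum ≤ B * r

/-- The value of the finite continued fraction `[0; a₁, …, aₘ] = 1/(a₁ + 1/(a₂ + ⋯))`. -/
def cfVal : List ℕ → ℚ
  | [] => 0
  | a :: t => 1 / (a + cfVal t)

/-!
Write `S` for the set of the statement and `ρ = 1 + √2`. A multiset of size `t` on `t + 1`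
points (there are `C(2t, t)` of them) gives, through its multiplicities plus one, a positive
list of length `t + 1` and sum `2t + 1`; by the cycle lemma one of its rotations `b` is bounded
in average by `2`, hence so are `1 :: (b ++ [2])` and its tail `b ++ [2]`. Their continuants `q`
and `p` lie in `S`, and since the expansion ends in `2` the pair `(q, p)` determines `b`.
Bounding the norm of `!![a, 1; 1, 0]` by `(1 + √2) (8/11)² (11/8)^a`, which is exact at `a = 2`
and geometric in `a`, gives `q ≤ ρ^m` for any positive expansion of length `m` and sum at most
`2m`, so `q ≤ ρ^(t+3)`. Hence `C(2t, t) ≤ (t + 1) |S ∩ [1, n]|²` as soon as `ρ^(t+3) ≤ n`,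
that is `|S ∩ [1, n]| ≫ n^(log 2 / log ρ) / log n`.
-/

def cfNum : List ℕ → ℕ
  | [] => 0
  | _ :: t => contAux t

@[simp] lemma cfNum_cons (a : ℕ) (t : List ℕ) : cfNum (a :: t) = contAux t := rfl

lemma contAux_cons (a : ℕ) (t : List ℕ) : contAux (a :: t) = a * contAux t + cfNum t := by
  cases t <;> simp [contAux, cfNum]

lemma contAux_pos {l : List ℕ} (hl : ∀ x ∈ l, 0 < x) : 0 < contAux l := by
  induction l with
  | nil => simp [contAux]
  | cons a t ih =>
    simp only [List.mem_cons, forall_eq_or_imp] at hl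
    have := ih hl.2
    have := hl.1
    rw [contAux_cons]
    positivity

lemma cfNum_pos {l : List ℕ} (hl : ∀ x ∈ l, 0 < x) (hne : l ≠ []) : 0 < cfNum l := by
  obtain ⟨a, t, rfl⟩ := List.exists_cons_of_ne_nil hne
  exact contAux_pos fun x hx => hl x (List.mem_cons_of_mem a hx)

lemma cfNum_lt_contAux {l : List ℕ} (hl : ∀ x ∈ l, 0 < x) (hlast : ∀ a ∈ l.getLast?, 2 ≤ a) :
    cfNum l < contAux l := by
  match l, hl, hlast with
  | [], _, _ => simp [contAux, cfNum]
  | [a], _, hlast => simpa [contAux, Nat.lt_iff_add_one_le] using hlast a rfl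
  | a :: b :: t, hl, _ =>
    have ha : 0 < a := hl a (by simp)
    have hbt : 0 < cfNum (b :: t) := cfNum_pos (fun x hx => hl x (by simp_all)) (by simp)
    rw [contAux_cons, cfNum_cons]
    nlinarith

lemma coprime_cfNum_contAux (l : List ℕ) : (cfNum l).Coprime (contAux l) := by
  induction l with
  | nil => simp [contAux, cfNum]
  | cons a t ih =>
    rw [cfNum_cons, contAux_cons, Nat.Coprime, add_comm, Nat.gcd_add_mul_right_right]
    exact ih.symm

lemma cfVal_eq_cfNum_div_contAux {l : List ℕ} (hl : ∀ x ∈ l, 0 < x) :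
    cfVal l = cfNum l / contAux l := by
  induction l with
  | nil => simp [cfVal, contAux, cfNum]
  | cons a t ih =>
    simp only [List.mem_cons, forall_eq_or_imp] at hl
    have hq : (0 : ℚ) < contAux t := by exact_mod_cast contAux_pos hl.2
    rw [cfVal, ih hl.2, cfNum_cons, contAux_cons]
    push_cast
    field_simp

lemma forall_getLast?_of_cons {p : ℕ → Prop} {a : ℕ} {t : List ℕ}
    (h : ∀ x ∈ (a :: t).getLast?, p x) : ∀ x ∈ t.getLast?, p x := by
  cases t with
  | nil => simp
  | cons b u => simpa using h

lemma eq_of_contAux_eq_of_cfNum_eq {l l' : List ℕ} (hl : ∀ x ∈ l, 0 < x)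
    (hl' : ∀ x ∈ l', 0 < x) (hlast : ∀ a ∈ l.getLast?, 2 ≤ a)
    (hlast' : ∀ a ∈ l'.getLast?, 2 ≤ a) (hq : contAux l = contAux l')
    (hp : cfNum l = cfNum l') : l = l' := by
  induction l generalizing l' with
  | nil =>
    cases l' with
    | nil => rfl
    | cons a' t' => exact absurd hp (cfNum_pos hl' (List.cons_ne_nil a' t')).ne
  | cons a t ih =>
    cases l' with
    | nil => exact absurd hp (cfNum_pos hl (List.cons_ne_nil a t)).ne'
    | cons a' t' =>
      simp only [List.mem_cons, forall_eq_or_imp] at hl hl'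
      simp only [cfNum_cons] at hp
      have hr := cfNum_lt_contAux hl.2 (forall_getLast?_of_cons hlast)
      have hr' := cfNum_lt_contAux hl'.2 (forall_getLast?_of_cons hlast')
      rw [contAux_cons, contAux_cons, ← hp] at hq
      rw [← hp] at hr'
      have hdivmod : ∀ {b r : ℕ}, r < contAux t →
          (b * contAux t + r) / contAux t = b ∧ (b * contAux t + r) % contAux t = r :=
        fun hr => (Nat.div_mod_unique (contAux_pos hl.2)).2 ⟨by ring, hr⟩
      obtain ⟨hdiv, hmod⟩ := hdivmod (b := a) hr
      obtain ⟨hdiv', hmod'⟩ := hdivmod (b := a') hr'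
      rw [hq] at hdiv hmod
      rw [hdiv.symm.trans hdiv', ih hl.2 hl'.2 (forall_getLast?_of_cons hlast)
        (forall_getLast?_of_cons hlast') hp (hmod.symm.trans hmod')]

lemma mul_add_sq_add_sq_le (a u v : ℝ) :
    (a * u + v) ^ 2 + u ^ 2 ≤ (a ^ 2 + 2) * (u ^ 2 + v ^ 2) := by
  nlinarith [sq_nonneg (u - a * v)]

lemma two_mul_add_sq_add_sq_le (u v : ℝ) :
    (2 * u + v) ^ 2 + u ^ 2 ≤ (1 + √2) ^ 2 * (u ^ 2 + v ^ 2) := by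
  have hs : √2 ^ 2 = 2 := Real.sq_sqrt zero_le_two
  have hs1 : 0 ≤ √2 - 1 := by nlinarith [Real.sqrt_nonneg 2]
  have key : (1 + √2) ^ 2 * (u ^ 2 + v ^ 2) - ((2 * u + v) ^ 2 + u ^ 2) =
      2 * (√2 - 1) * (u - (1 + √2) * v) ^ 2 := by
    linear_combination (u ^ 2 + 4 * u * v - (2 * √2 + 1) * v ^ 2) * hs
  have := mul_nonneg (mul_nonneg zero_le_two hs1) (sq_nonneg (u - (1 + √2) * v))
  linarith

/-- The ratio `11/8` is constrained by `a ^ 2 + 2 ≤ cfGrowth a ^ 2` at `a = 1` and at `a = 3`. -/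
noncomputable def cfGrowth (a : ℕ) : ℝ := (1 + √2) * (8 / 11) ^ 2 * (11 / 8) ^ a

lemma cfGrowth_two : cfGrowth 2 = 1 + √2 := by
  rw [cfGrowth, mul_assoc, ← mul_pow]
  norm_num

lemma sq_add_two_le_sq_cfGrowth_of_three_le {a : ℕ} (ha : 3 ≤ a) :
    (a : ℝ) ^ 2 + 2 ≤ cfGrowth a ^ 2 := by
  have hs : √2 ^ 2 = 2 := Real.sq_sqrt zero_le_two
  have hs' : (1.41 : ℝ) ≤ √2 := by nlinarith [Real.sqrt_nonneg 2]
  induction a, ha using Nat.le_induction with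
  | base => norm_num [cfGrowth]; nlinarith
  | succ a ha ih =>
    have ha3 : (3 : ℝ) ≤ a := by exact_mod_cast ha
    have hstep : cfGrowth (a + 1) = cfGrowth a * (11 / 8) := by
      rw [cfGrowth, cfGrowth, pow_succ]
      ring
    rw [hstep, mul_pow]
    push_cast
    nlinarith [mul_nonneg (by linarith : (0 : ℝ) ≤ a) (by linarith : (0 : ℝ) ≤ 57 * a - 128)]

lemma sq_add_two_le_sq_cfGrowth {a : ℕ} (ha : 1 ≤ a) (ha2 : a ≠ 2) :
    (a : ℝ) ^ 2 + 2 ≤ cfGrowth a ^ 2 := by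
  rcases (show a = 1 ∨ 3 ≤ a by omega) with rfl | ha3
  · have hs : √2 ^ 2 = 2 := Real.sq_sqrt zero_le_two
    have hs' : (1.41 : ℝ) ≤ √2 := by nlinarith [Real.sqrt_nonneg 2]
    norm_num [cfGrowth]
    nlinarith
  · exact sq_add_two_le_sq_cfGrowth_of_three_le ha3

lemma mul_add_sq_add_sq_le_cfGrowth {a : ℕ} (ha : 1 ≤ a) (u v : ℝ) :
    (a * u + v) ^ 2 + u ^ 2 ≤ cfGrowth a ^ 2 * (u ^ 2 + v ^ 2) := by
  by_cases ha2 : a = 2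
  · subst ha2
    rw [cfGrowth_two]
    exact_mod_cast two_mul_add_sq_add_sq_le u v
  · exact (mul_add_sq_add_sq_le a u v).trans
      (mul_le_mul_of_nonneg_right (sq_add_two_le_sq_cfGrowth ha ha2) (by positivity))

lemma sq_contAux_add_sq_cfNum_le {l : List ℕ} (hl : ∀ x ∈ l, 0 < x) :
    (contAux l : ℝ) ^ 2 + (cfNum l : ℝ) ^ 2 ≤
      (((1 + √2) * (8 / 11) ^ 2) ^ l.length * (11 / 8) ^ l.sum) ^ 2 := by
  induction l with
  | nil => simp [contAux, cfNum]
  | cons a t ih =>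
    simp only [List.mem_cons, forall_eq_or_imp] at hl
    rw [contAux_cons, cfNum_cons, List.length_cons, List.sum_cons]
    push_cast
    calc ((a : ℝ) * contAux t + cfNum t) ^ 2 + (contAux t : ℝ) ^ 2
        ≤ cfGrowth a ^ 2 * ((contAux t : ℝ) ^ 2 + (cfNum t : ℝ) ^ 2) :=
          mul_add_sq_add_sq_le_cfGrowth hl.1 _ _
      _ ≤ cfGrowth a ^ 2 * (((1 + √2) * (8 / 11) ^ 2) ^ t.length * (11 / 8) ^ t.sum) ^ 2 :=
          mul_le_mul_of_nonneg_left (ih hl.2) (sq_nonneg _)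
      _ = _ := by rw [cfGrowth]; ring

lemma contAux_le_silver_pow {l : List ℕ} (hl : ∀ x ∈ l, 0 < x) (hsum : l.sum ≤ 2 * l.length) :
    (contAux l : ℝ) ≤ (1 + √2) ^ l.length := by
  have hsq : (contAux l : ℝ) ^ 2 ≤
      (((1 + √2) * (8 / 11) ^ 2) ^ l.length * (11 / 8) ^ l.sum) ^ 2 := by
    nlinarith [sq_contAux_add_sq_cfNum_le hl, sq_nonneg (cfNum l : ℝ)]
  calc (contAux l : ℝ) ≤ ((1 + √2) * (8 / 11) ^ 2) ^ l.length * (11 / 8) ^ l.sum :=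
        (pow_le_pow_iff_left₀ (by positivity) (by positivity) two_ne_zero).1 hsq
    _ ≤ ((1 + √2) * (8 / 11) ^ 2) ^ l.length * (11 / 8) ^ (2 * l.length) := by
        gcongr
        norm_num
    _ = (1 + √2) ^ l.length := by
        rw [pow_mul, ← mul_pow, mul_assoc, ← mul_pow]
        norm_num

lemma bddAvg_iff {B : ℕ} {l : List ℕ} : BddAvg B l ↔ ∀ r, (l.take r).sum ≤ B * r := by
  refine ⟨fun h r => ?_, fun h r _ _ => h r⟩
  rcases Nat.eq_zero_or_pos r with rfl | hr
  · simp
  rcases le_or_gt r l.length with hrl | hlr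
  · exact h r hr hrl
  · rw [List.take_of_length_le hlr.le]
    rcases Nat.eq_zero_or_pos l.length with hl | hl
    · simp [List.length_eq_zero_iff.1 hl]
    · simpa using (h l.length hl le_rfl).trans (Nat.mul_le_mul_left B hlr.le)

lemma BddAvg.sum_le {B : ℕ} {l : List ℕ} (h : BddAvg B l) : l.sum ≤ B * l.length := by
  simpa using bddAvg_iff.1 h l.length

lemma BddAvg.cons {B a : ℕ} {l : List ℕ} (h : BddAvg B l) (ha : a ≤ B) :
    BddAvg B (a :: l) := by
  refine bddAvg_iff.2 fun r => ?_
  cases r with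
  | zero => simp
  | succ r =>
    rw [List.take_succ_cons, List.sum_cons]
    linarith [bddAvg_iff.1 h r]

lemma BddAvg.append_singleton {B a : ℕ} {l : List ℕ} (h : BddAvg B l) (ha : a ≤ B) :
    BddAvg B (l ++ [a]) := by
  refine bddAvg_iff.2 fun r => ?_
  rw [List.take_append, List.sum_append]
  rcases le_or_gt r l.length with hr | hr
  · simpa [Nat.sub_eq_zero_of_le hr] using bddAvg_iff.1 h r
  · rw [List.take_of_length_le hr.le]
    have hsingle : (List.take (r - l.length) [a]).sum ≤ a := by
      cases r - l.length <;> simp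
    nlinarith [h.sum_le]

lemma sum_take_rotate_add {l : List ℕ} {k r : ℕ} (hk : k ≤ l.length) (hr : r ≤ l.length) :
    ((l.rotate k).take r).sum + (l.take k).sum = ((l ++ l).take (k + r)).sum := by
  rw [List.take_add, List.sum_append, add_comm, List.drop_append_of_le_length hk,
    List.rotate_eq_drop_append_take hk, List.take_append_of_le_length hk, List.take_append,
    List.take_append, List.take_take, min_eq_left (by simp; omega)]

/-- The cycle lemma. The rotation starts at a maximiser `k` of `G j = (prefix sum of length j of
l ++ l) - B * j` over `j < l.length`; since `G (l.length + i) ≤ G i`, it maximises `G` up to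
`2 * l.length` as well. -/
lemma exists_rotate_bddAvg {B : ℕ} {l : List ℕ} (hne : l ≠ []) (hsum : l.sum ≤ B * l.length) :
    ∃ k < l.length, BddAvg B (l.rotate k) := by
  set L := l.length
  set P : ℕ → ℕ := fun j => ((l ++ l).take j).sum
  have hPL : ∀ i ≤ L, P (L + i) = l.sum + P i := fun i hi => by
    simp [P, List.take_append, List.take_of_length_le, Nat.sub_eq_zero_of_le hi, L]
  let G : ℕ → ℤ := fun j => (P j : ℤ) - B * j
  obtain ⟨k, hkL, hmax⟩ := Finset.exists_max_image (Finset.range L) G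
    ⟨0, Finset.mem_range.2 (List.length_pos_iff.2 hne)⟩
  have hk : k < L := Finset.mem_range.1 hkL
  have hG0 : G 0 ≤ G k := hmax 0 (Finset.mem_range.2 (Nat.zero_lt_of_lt hk))
  have hGL : ∀ i ≤ L, G (L + i) ≤ G i := fun i hi => by
    have : (l.sum : ℤ) ≤ B * L := by exact_mod_cast hsum
    simp only [G, hPL i hi]
    push_cast
    linarith
  have hfirst : ∀ j ≤ L, G j ≤ G k := by
    intro j hj
    rcases hj.lt_or_eq with hj | rfl
    · exact hmax j (Finset.mem_range.2 hj)
    · simpa using (hGL 0 (Nat.zero_le L)).trans hG0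
  refine ⟨k, hk, fun r _ hr => ?_⟩
  rw [List.length_rotate] at hr
  have hkr : G (k + r) ≤ G k := by
    rcases le_or_gt (k + r) L with h | h
    · exact hfirst _ h
    · obtain ⟨i, hi⟩ := Nat.exists_eq_add_of_le h.le
      rw [hi]
      exact (hGL i (by omega)).trans (hfirst i (by omega))
  have hrot : ((l.rotate k).take r).sum + P k = P (k + r) := by
    simp only [P, List.take_append_of_le_length hk.le]
    exact sum_take_rotate_add hk.le hr
  have hrot' : (((l.rotate k).take r).sum : ℤ) + P k = P (k + r) := by exact_mod_cast hrot
  have : (((l.rotate k).take r).sum : ℤ) ≤ B * r := by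
    simp only [G] at hkr
    push_cast at hkr
    linarith
  exact_mod_cast this

/-- The set `S` of the statement, for an arbitrary average bound `B`. -/
def avgBddDenominators (B : ℕ) : Set ℕ :=
  {q | ∃ k, 1 ≤ k ∧ k < q ∧ Nat.Coprime k q ∧
    ∃ l : List ℕ, (∀ x ∈ l, 0 < x) ∧ BddAvg B l ∧ cfVal l = (k : ℚ) / q}

lemma contAux_mem_avgBddDenominators {B : ℕ} {l : List ℕ} (hl : ∀ x ∈ l, 0 < x) (hne : l ≠ [])
    (hlast : ∀ a ∈ l.getLast?, 2 ≤ a) (hB : BddAvg B l) : contAux l ∈ avgBddDenominators B :=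
  ⟨cfNum l, cfNum_pos hl hne, cfNum_lt_contAux hl hlast, coprime_cfNum_contAux l, l, hl, hB,
    cfVal_eq_cfNum_div_contAux hl⟩

/-- The final `2` makes the expansion canonical; the initial `1` keeps the tail bounded in
average, so that the numerator is again in `avgBddDenominators 2`. -/
def frame (b : List ℕ) : List ℕ := 1 :: (b ++ [2])

section Frame

variable {b : List ℕ}

lemma pos_of_mem_append_two (hb : ∀ x ∈ b, 0 < x) : ∀ x ∈ b ++ [2], 0 < x := by
  simpa [or_imp, forall_and] using hb

lemma pos_of_mem_frame (hb : ∀ x ∈ b, 0 < x) : ∀ x ∈ frame b, 0 < x := by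
  simpa [frame, or_imp, forall_and] using hb

lemma getLast?_frame : (frame b).getLast? = some 2 := by
  rw [frame, ← List.cons_append, List.getLast?_append]
  simp

lemma length_frame : (frame b).length = b.length + 2 := by
  simp [frame]

lemma cfNum_frame_mem (hb : ∀ x ∈ b, 0 < x) (hB : BddAvg 2 b) :
    cfNum (frame b) ∈ avgBddDenominators 2 :=
  contAux_mem_avgBddDenominators (pos_of_mem_append_two hb) (by simp) (by simp)
    (hB.append_singleton le_rfl)

lemma contAux_frame_mem (hb : ∀ x ∈ b, 0 < x) (hB : BddAvg 2 b) :
    contAux (frame b) ∈ avgBddDenominators 2 :=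
  contAux_mem_avgBddDenominators (pos_of_mem_frame hb) (by simp [frame])
    (by simp [getLast?_frame]) ((hB.append_singleton le_rfl).cons one_le_two)

lemma cfNum_frame_lt_contAux_frame (hb : ∀ x ∈ b, 0 < x) : cfNum (frame b) < contAux (frame b) :=
  cfNum_lt_contAux (pos_of_mem_frame hb) (by simp [getLast?_frame])

lemma contAux_frame_le (hb : ∀ x ∈ b, 0 < x) (hB : BddAvg 2 b) :
    (contAux (frame b) : ℝ) ≤ (1 + √2) ^ (b.length + 2) := by
  have hsum : (frame b).sum ≤ 2 * (frame b).length := by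
    simp [frame]
    linarith [hB.sum_le]
  simpa [length_frame] using contAux_le_silver_pow (pos_of_mem_frame hb) hsum

lemma injOn_contAux_cfNum_frame :
    Set.InjOn (fun b => (contAux (frame b), cfNum (frame b))) {b | ∀ x ∈ b, 0 < x} := by
  intro b hb b' hb' h
  simp only [Prod.mk.injEq] at h
  have := eq_of_contAux_eq_of_cfNum_eq (pos_of_mem_frame hb) (pos_of_mem_frame hb')
    (by simp [getLast?_frame]) (by simp [getLast?_frame]) h.1 h.2
  simpa [frame] using this

end Frame

def succCounts {s t : ℕ} (m : Sym (Fin s) t) : List ℕ := List.ofFn fun i => m.1.count i + 1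

lemma succCounts_pos {s t : ℕ} (m : Sym (Fin s) t) : ∀ x ∈ succCounts m, 0 < x := by
  simp [succCounts]

lemma length_succCounts {s t : ℕ} (m : Sym (Fin s) t) : (succCounts m).length = s := by
  simp [succCounts]

lemma sum_succCounts {s t : ℕ} (m : Sym (Fin s) t) : (succCounts m).sum = t + s := by
  simp [succCounts, List.sum_ofFn, Finset.sum_add_distrib, Multiset.sum_count_eq_card]

lemma succCounts_injective {s t : ℕ} : Function.Injective (succCounts (s := s) (t := t)) := by
  intro m m' h
  apply Sym.ext
  ext i
  simpa using congrFun (List.ofFn_injective h) i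

lemma centralBinom_le_mul_sq_ncard {t n : ℕ} (hn : (1 + √2) ^ (t + 3) ≤ (n : ℝ)) :
    t.centralBinom ≤ (t + 1) * (avgBddDenominators 2 ∩ Set.Icc 1 n).ncard ^ 2 := by
  classical
  set A := (Finset.Icc 1 n).filter (· ∈ avgBddDenominators 2)
  have hA : (avgBddDenominators 2 ∩ Set.Icc 1 n).ncard = A.card := by
    rw [← Set.ncard_coe_finset]
    congr 1
    ext q
    simp [A, and_comm]
  have hcard : (Finset.univ : Finset (Sym (Fin (t + 1)) t)).card = t.centralBinom := by
    rw [Finset.card_univ, Sym.card_sym_eq_choose, Fintype.card_fin,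
      Nat.centralBinom_eq_two_mul_choose]
    congr 1
    omega
  choose k hk hgood using fun m : Sym (Fin (t + 1)) t =>
    exists_rotate_bddAvg (l := succCounts m) (B := 2)
      (List.ne_nil_of_length_pos (by simp [length_succCounts]))
      (by rw [sum_succCounts, length_succCounts]; omega)
  let b m := (succCounts m).rotate (k m)
  have hb_pos : ∀ m, ∀ x ∈ b m, 0 < x := fun m x hx =>
    succCounts_pos m x (List.mem_rotate.1 hx)
  have hb_len : ∀ m, (b m).length = t + 1 := fun m => by simp [b, length_succCounts]
  let f m := ((contAux (frame (b m)), cfNum (frame (b m))), k m)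
  have hmaps : Set.MapsTo f Set.univ ((A ×ˢ A) ×ˢ Finset.range (t + 1) : Finset _) := by
    intro m _
    have hle : contAux (frame (b m)) ≤ n := by
      have := contAux_frame_le (hb_pos m) (hgood m)
      rw [hb_len m] at this
      exact_mod_cast this.trans hn
    have hlt := cfNum_frame_lt_contAux_frame (hb_pos m)
    have hpos := cfNum_pos (pos_of_mem_frame (hb_pos m)) (by simp [frame])
    simp only [Finset.coe_product, Set.mem_prod, Finset.mem_coe, Finset.mem_filter,
      Finset.mem_Icc, Finset.mem_range, A, f]
    refine ⟨⟨⟨⟨by omega, hle⟩, contAux_frame_mem (hb_pos m) (hgood m)⟩,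
      ⟨⟨hpos, by omega⟩, cfNum_frame_mem (hb_pos m) (hgood m)⟩⟩, ?_⟩
    simpa [length_succCounts] using hk m
  have hinj : Set.InjOn f Set.univ := by
    intro m _ m' _ h
    simp only [f, Prod.mk.injEq] at h
    obtain ⟨hqp, hkeq⟩ := h
    have hbeq : b m = b m' :=
      injOn_contAux_cfNum_frame (hb_pos m) (hb_pos m') (Prod.ext hqp.1 hqp.2)
    simp only [b, hkeq, List.rotate_eq_rotate] at hbeq
    exact succCounts_injective hbeq
  calc t.centralBinom = (Finset.univ : Finset (Sym (Fin (t + 1)) t)).card := hcard.symm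
    _ ≤ ((A ×ˢ A) ×ˢ Finset.range (t + 1)).card :=
      Finset.card_le_card_of_injOn f (by simpa using hmaps) (by simpa using hinj)
    _ = _ := by rw [hA]; simp [Finset.card_product]; ring
lemma two_pow_le_mul_ncard {t n : ℕ} (hn : (1 + √2) ^ (t + 3) ≤ (n : ℝ)) :
    2 ^ t ≤ 2 * (t + 1) * (avgBddDenominators 2 ∩ Set.Icc 1 n).ncard := by
  set X := (avgBddDenominators 2 ∩ Set.Icc 1 n).ncard
  refine (Nat.pow_le_pow_iff_left two_ne_zero).1 ?_
  calc (2 ^ t) ^ 2 = 4 ^ t := by rw [← pow_mul, mul_comm, pow_mul]; norm_num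
    _ ≤ (2 * t + 1) * t.centralBinom := Nat.four_pow_le_two_mul_add_one_mul_central_binom t
    _ ≤ (2 * t + 1) * ((t + 1) * X ^ 2) := Nat.mul_le_mul_left _ (centralBinom_le_mul_sq_ncard hn)
    _ ≤ (2 * (t + 1) * X) ^ 2 := by ring_nf; omega

lemma rpow_logb_two_le_mul_ncard {n : ℕ} (hn : (1 + √2) ^ 3 ≤ (n : ℝ)) :
    (n : ℝ) ^ Real.logb (1 + √2) 2 ≤
      32 * Real.logb (1 + √2) n * (avgBddDenominators 2 ∩ Set.Icc 1 n).ncard := by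
  set ρ : ℝ := 1 + √2
  have hρ : 1 < ρ := by simp [ρ]
  have hn0 : (0 : ℝ) < n := (by positivity : (0 : ℝ) < ρ ^ 3).trans_le hn
  have h3 : ((3 : ℕ) : ℝ) ≤ Real.logb ρ n := (Real.le_logb_iff_rpow_le hρ hn0).2 (by simpa using hn)
  obtain ⟨t, ht⟩ := Nat.exists_eq_add_of_le' (Nat.le_floor h3)
  have hlow : ρ ^ (t + 3) ≤ n := by
    have := (Real.le_logb_iff_rpow_le hρ hn0).1 (ht ▸ Nat.floor_le (by linarith))
    exact_mod_cast this
  have hup : (n : ℝ) < ρ ^ (t + 4) := by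
    have := (Real.logb_lt_iff_lt_rpow hρ hn0).1 (Nat.lt_floor_add_one (Real.logb ρ n))
    rw [ht] at this
    exact_mod_cast this
  have ht1 : (t : ℝ) + 1 ≤ Real.logb ρ n := by
    have := Nat.floor_le (a := Real.logb ρ n) (by linarith)
    rw [ht] at this
    push_cast at this
    linarith
  have h2 : (2 : ℝ) ^ t ≤ 2 * (t + 1) * (avgBddDenominators 2 ∩ Set.Icc 1 n).ncard := by
    exact_mod_cast two_pow_le_mul_ncard hlow
  have hc : 0 ≤ Real.logb ρ 2 := Real.logb_nonneg hρ one_le_two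
  calc (n : ℝ) ^ Real.logb ρ 2 ≤ (ρ ^ (t + 4)) ^ Real.logb ρ 2 := by gcongr
    _ = 16 * 2 ^ t := by
      rw [← Real.rpow_pow_comm (by positivity), Real.rpow_logb (by positivity) hρ.ne' two_pos,
        pow_add]
      ring
    _ ≤ 32 * Real.logb ρ n * (avgBddDenominators 2 ∩ Set.Icc 1 n).ncard := by
      nlinarith

lemma eventually_const_mul_logb_le_rpow (b c : ℝ) {ε : ℝ} (hε : 0 < ε) :
    ∀ᶠ x : ℝ in Filter.atTop, c * Real.logb b x ≤ x ^ ε := by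
  have hlog : (fun x : ℝ => c * Real.logb b x) =o[Filter.atTop] fun x => x ^ ε := by
    simpa only [Real.logb, mul_div_assoc', div_eq_mul_inv, mul_comm _ (Real.log b)⁻¹,
      ← mul_assoc] using (isLittleO_log_rpow_atTop hε).const_mul_left (c * (Real.log b)⁻¹)
  filter_upwards [hlog.eventuallyLE, Filter.eventually_gt_atTop 0] with x hle hx
  exact (le_abs_self _).trans (by simpa [abs_of_pos (Real.rpow_pos_of_pos hx ε)] using hle)

theorem density_of_F2 (ε : ℝ) (hε : 0 < ε) :
    ∃ N : ℕ, ∀ n ≥ N,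
      (n : ℝ) ^ (Real.log 2 / Real.log (1 + Real.sqrt 2) - ε) ≤
        (({q : ℕ | ∃ k, 1 ≤ k ∧ k < q ∧ Nat.Coprime k q ∧
            ∃ l : List ℕ, (∀ x ∈ l, 0 < x) ∧ BddAvg 2 l ∧
              cfVal l = (k : ℚ) / q} ∩ Set.Icc 1 n).ncard : ℝ) := by
  have hev : ∀ᶠ x : ℝ in Filter.atTop, (1 + √2) ^ 3 ≤ x ∧ 32 * Real.logb (1 + √2) x ≤ x ^ ε :=
    (Filter.eventually_ge_atTop _).and (eventually_const_mul_logb_le_rpow _ _ hε)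
  obtain ⟨N, hN⟩ := Filter.eventually_atTop.1 (tendsto_natCast_atTop_atTop.eventually hev)
  refine ⟨N, fun n hn => ?_⟩
  obtain ⟨hn3, hsmall⟩ := hN n hn
  have hn0 : (0 : ℝ) < n := (by positivity : (0 : ℝ) < (1 + √2) ^ 3).trans_le hn3
  change (n : ℝ) ^ (Real.logb (1 + √2) 2 - ε) ≤ (avgBddDenominators 2 ∩ Set.Icc 1 n).ncard
  rw [Real.rpow_sub hn0, div_le_iff₀ (Real.rpow_pos_of_pos hn0 ε)]
  exact (rpow_logb_two_le_mul_ncard hn3).trans (by rw [mul_comm]; gcongr)
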